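/- arXiv:2303.16952 — 5 statements merged into one kernel-verified Lean document; each statement's English description precedes it below -/
import Mathlib

section
/- Let X ∈ ℝ^{n×p} with XᵀX invertible, y ∈ ℝ^n; for i = 1,…,N let Δ_i ∈ ℝ^p, θ_i^{(1)} ∈ ℝ^p, g_i = 2XᵀX(θ_i^{(1)} − Δ_i) − 2Xᵀy, and y_i' = −Xθ_i^{(1)} + y + XΔ_i. Define l^total(B) = (1/N)Σ_{i=1}^N ‖XBg_i + y_i'‖² and l* = ‖X(XᵀX)⁻¹Xᵀy − y‖². Then l^total(B) ≥ l* for every B ∈ ℝ^{p×p}; consequently B* = (1/2)(XᵀX)⁻¹ is a global minimizer of l^total. -/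
/-!
Each task's residual is `X B gᵢ + yᵢ' = -(X (θᵢ⁽¹⁾ - Δᵢ - B gᵢ) - y)`, a least-squares residual of
the unshifted problem, so by the normal equations (Pythagoras) its squared norm is at least `l*`,
and so is the average `l^total(B)`. Moreover `B* gᵢ` is the Newton step of the quadratic task loss,
so `θᵢ⁽¹⁾ - Δᵢ - B* gᵢ = (XᵀX)⁻¹Xᵀy` for every task and `l^total(B*) = l*`.
-/

open Finset Matrix
open scoped BigOperators

section LeastSquares

variable {m k : Type*} [Fintype m] [Fintype k]

theorem sum_sq_add_of_dotProduct_eq_zero {a b : m → ℝ} (h : a ⬝ᵥ b = 0) :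
    ∑ j, ((a + b) j) ^ 2 = ∑ j, (a j) ^ 2 + ∑ j, (b j) ^ 2 := by
  have hexpand : ∑ j, ((a + b) j) ^ 2 = ∑ j, (a j) ^ 2 + ∑ j, (b j) ^ 2 + 2 * (a ⬝ᵥ b) := by
    simp only [dotProduct, mul_sum, ← sum_add_distrib, Pi.add_apply]
    exact sum_congr rfl fun _ _ => by ring
  rw [hexpand, h, mul_zero, add_zero]

theorem sum_sq_sub_le_of_transpose_mulVec_eq_zero (X : Matrix m k ℝ) (y : m → ℝ) {w : k → ℝ}
    (hw : Xᵀ *ᵥ (X *ᵥ w - y) = 0) (u : k → ℝ) :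
    ∑ j, ((X *ᵥ w - y) j) ^ 2 ≤ ∑ j, ((X *ᵥ u - y) j) ^ 2 := by
  have hsplit : X *ᵥ u - y = (X *ᵥ w - y) + X *ᵥ (u - w) := by
    rw [mulVec_sub]; abel
  have horth : (X *ᵥ w - y) ⬝ᵥ X *ᵥ (u - w) = 0 := by
    rw [dotProduct_mulVec, ← mulVec_transpose, hw, zero_dotProduct]
  rw [hsplit, sum_sq_add_of_dotProduct_eq_zero horth]
  exact le_add_of_nonneg_right (sum_nonneg fun _ _ => sq_nonneg _)

variable [DecidableEq k]

theorem transpose_mulVec_leastSquares_residual (X : Matrix m k ℝ) (hX : IsUnit (Xᵀ * X))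
    (y : m → ℝ) : Xᵀ *ᵥ (X *ᵥ ((Xᵀ * X)⁻¹ *ᵥ (Xᵀ *ᵥ y)) - y) = 0 := by
  rw [mulVec_sub, mulVec_mulVec, mulVec_mulVec,
    mul_nonsing_inv _ ((isUnit_iff_isUnit_det _).mp hX), one_mulVec, sub_self]

theorem sum_sq_leastSquares_le (X : Matrix m k ℝ) (hX : IsUnit (Xᵀ * X)) (y : m → ℝ)
    (u : k → ℝ) :
    ∑ j, ((X *ᵥ ((Xᵀ * X)⁻¹ *ᵥ (Xᵀ *ᵥ y)) - y) j) ^ 2 ≤ ∑ j, ((X *ᵥ u - y) j) ^ 2 :=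
  sum_sq_sub_le_of_transpose_mulVec_eq_zero X y (transpose_mulVec_leastSquares_residual X hX y) u

theorem sub_half_inv_mulVec_gradient {A : Matrix k k ℝ} (hA : IsUnit A) (v b : k → ℝ) :
    v - (((1 : ℝ) / 2) • A⁻¹) *ᵥ ((2 : ℝ) • (A *ᵥ v) - (2 : ℝ) • b) = A⁻¹ *ᵥ b := by
  rw [smul_mulVec, mulVec_sub, mulVec_smul, mulVec_smul, mulVec_mulVec,
    nonsing_inv_mul _ ((isUnit_iff_isUnit_det _).mp hA), one_mulVec, smul_sub, smul_smul,
    smul_smul]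
  norm_num

end LeastSquares

/-- the one-step meta-training loss `l^total(B) = (1/N)Σᵢ ‖XBgᵢ + yᵢ'‖²`
satisfies `l^total(B) ≥ l*` for every `B`, where `l* = ‖X(XᵀX)⁻¹Xᵀy − y‖²`;
consequently `B* = (1/2)(XᵀX)⁻¹` is a global minimizer of `l^total`. -/
theorem ltotal_ge_lstar_and_Bstar_min {n p N : ℕ} (hN : 0 < N)
    (X : Matrix (Fin n) (Fin p) ℝ) (hX : IsUnit (Xᵀ * X)) (y : Fin n → ℝ)
    (Δ θ₁ : Fin N → Fin p → ℝ)
    (g : Fin N → Fin p → ℝ)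
    (hg : ∀ i, g i = (2 : ℝ) • ((Xᵀ * X) *ᵥ (θ₁ i - Δ i)) - (2 : ℝ) • (Xᵀ *ᵥ y))
    (y' : Fin N → Fin n → ℝ)
    (hy' : ∀ i, y' i = -(X *ᵥ θ₁ i) + y + X *ᵥ Δ i)
    (ltotal : Matrix (Fin p) (Fin p) ℝ → ℝ)
    (hltotal : ∀ B, ltotal B = (1 / (N : ℝ)) * ∑ i, ∑ j, ((X *ᵥ (B *ᵥ g i) + y' i) j) ^ 2)
    (lstar : ℝ)
    (hlstar : lstar = ∑ j, ((X *ᵥ ((Xᵀ * X)⁻¹ *ᵥ (Xᵀ *ᵥ y)) - y) j) ^ 2)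
    (Bstar : Matrix (Fin p) (Fin p) ℝ) (hBstar : Bstar = ((1 : ℝ) / 2) • (Xᵀ * X)⁻¹) :
    (∀ B, lstar ≤ ltotal B) ∧ (∀ B, ltotal Bstar ≤ ltotal B) := by
  have : Nonempty (Fin N) := Fin.pos_iff_nonempty.mp hN
  have hresidual : ∀ B i,
      X *ᵥ (B *ᵥ g i) + y' i = -(X *ᵥ (θ₁ i - Δ i - B *ᵥ g i) - y) := by
    intro B i
    rw [hy' i, mulVec_sub, mulVec_sub]
    abel
  have hmean : ∀ B,
      ltotal B = 𝔼 i, ∑ j, ((X *ᵥ (θ₁ i - Δ i - B *ᵥ g i) - y) j) ^ 2 := by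
    intro B
    simp only [hltotal, hresidual, Pi.neg_apply, neg_sq, Fintype.expect_eq_sum_div_card,
      Fintype.card_fin, one_div_mul_eq_div]
  have hlower : ∀ B, lstar ≤ ltotal B := fun B => by
    rw [hmean, hlstar]
    exact le_expect univ_nonempty fun i _ => sum_sq_leastSquares_le X hX y _
  have hoptimal : ltotal Bstar = lstar := by
    simp only [hmean, hBstar, hg, sub_half_inv_mulVec_gradient hX, hlstar, Fintype.expect_const]
  exact ⟨hlower, fun B => hoptimal ▸ hlower B⟩
end

section
/- Let X ∈ ℝ^{n×p} with XᵀX invertible, y ∈ ℝ^n; for i = 1,…,N let Δ_i, θ_i^{(1)} ∈ ℝ^p, g_i = 2XᵀX(θ_i^{(1)} − Δ_i) − 2Xᵀy, y_i' = −Xθ_i^{(1)} + y + XΔ_i, and Z_i = θ_i^{(1)} − Δ_i − (XᵀX)⁻¹Xᵀy. Define l^total(B) = (1/N)Σ_{i=1}^N ‖XBg_i + y_i'‖². If {Z_1,…,Z_N} spans ℝ^p, then l^total is strongly convex on ℝ^{p×p}: there exists m > 0 such that B ↦ l^total(B) − (m/2)‖B‖_F² is convex, where ‖·‖_F is the Frobenius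 norm. -/
/-!
Stacking the residuals `X B gᵢ + yᵢ'` into one Euclidean vector writes the loss as
`l(B) = (1/N) ‖L B + c‖²` with `L` linear. `L` is injective: `X` is injective because `XᵀX` is
invertible, and `B gᵢ = 0` for all `i` forces `B = 0` because the `gᵢ = 2 XᵀX Zᵢ` span `ℝᵖ`.
An injective linear map on a finite-dimensional space is antilipschitz, `‖B‖ ≤ K ‖L B‖`, and the
identity `‖a u + b v‖² = a ‖u‖² + b ‖v‖² - a b ‖u - v‖²` (for `a + b = 1`) turns this into
strong convexity with modulus `2 / (N K²)`. Since the Frobenius norm satisfies the parallelogram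
law, strong convexity is the convexity of `l - (m/2) ‖·‖²`.
-/

open Finset Matrix

attribute [local instance] Matrix.frobeniusNormedAddCommGroup Matrix.frobeniusNormedSpace

open Set Submodule

theorem norm_smul_add_smul_sq_of_add_eq_one {F : Type*} [NormedAddCommGroup F]
    [InnerProductSpace ℝ F] {a b : ℝ} (hab : a + b = 1) (u v : F) :
    ‖a • u + b • v‖ ^ 2 = a * ‖u‖ ^ 2 + b * ‖v‖ ^ 2 - a * b * ‖u - v‖ ^ 2 := by
  rw [norm_add_sq_real, norm_sub_sq_real, norm_smul, norm_smul, real_inner_smul_left,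
    real_inner_smul_right, Real.norm_eq_abs, Real.norm_eq_abs, mul_pow, mul_pow, sq_abs, sq_abs]
  obtain rfl := eq_sub_of_add_eq hab
  ring

section StrongConvexity

variable {E : Type*} [NormedAddCommGroup E] [NormedSpace ℝ E]

theorem StrongConvexOn.const_mul {s : Set E} {m c : ℝ} {f : E → ℝ}
    (hf : StrongConvexOn s m f) (hc : 0 ≤ c) : StrongConvexOn s (c * m) fun x => c * f x := by
  refine ⟨hf.1, fun x hx y hy a b ha hb hab => ?_⟩
  have := mul_le_mul_of_nonneg_left (hf.2 hx hy ha hb hab) hc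
  simp only [smul_eq_mul] at this ⊢
  linarith

theorem convexOn_univ_of_subsingleton [Subsingleton E] (f : E → ℝ) : ConvexOn ℝ univ f :=
  ⟨convex_univ, fun x _ y _ a b _ _ hab => by
    rw [Subsingleton.elim y x, Convex.combo_self hab, Convex.combo_self hab]⟩

theorem strongConvexOn_norm_map_add_sq {F : Type*} [NormedAddCommGroup F]
    [InnerProductSpace ℝ F] (L : E →ₗ[ℝ] F) (c : F) {K : NNReal} (hL : AntilipschitzWith K L) :
    StrongConvexOn univ (2 / K ^ 2) fun x => ‖L x + c‖ ^ 2 := by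
  refine ⟨convex_univ, fun x _ y _ a b ha hb hab => ?_⟩
  have hcomb : L (a • x + b • y) + c = a • (L x + c) + b • (L y + c) := by
    rw [map_add, map_smul, map_smul, smul_add, smul_add, add_add_add_comm, Convex.combo_self hab]
  have hdiff : L x + c - (L y + c) = L (x - y) := by rw [add_sub_add_right_eq_sub, map_sub]
  have hbound : ‖x - y‖ ^ 2 / K ^ 2 ≤ ‖L (x - y)‖ ^ 2 :=
    div_le_of_le_mul₀ (by positivity) (by positivity) <| by
      rw [← mul_pow, mul_comm]
      gcongr
      exact ZeroHomClass.bound_of_antilipschitz L hL (x - y)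
  simp only [smul_eq_mul]
  rw [hcomb, norm_smul_add_smul_sq_of_add_eq_one hab, hdiff]
  have hmod : 2 / (K : ℝ) ^ 2 / 2 * ‖x - y‖ ^ 2 = ‖x - y‖ ^ 2 / K ^ 2 := by ring
  rw [hmod]
  have := mul_le_mul_of_nonneg_left hbound (mul_nonneg ha hb)
  linarith

end StrongConvexity

theorem Matrix.frobenius_parallelogram_law {m n : Type*} [Fintype m] [Fintype n]
    (A B : Matrix m n ℝ) :
    ‖A + B‖ * ‖A + B‖ + ‖A - B‖ * ‖A - B‖ = 2 * (‖A‖ * ‖A‖ + ‖B‖ * ‖B‖) := by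
  simp only [← sq]
  exact parallelogram_law_with_norm ℝ (WithLp.toLp 2 fun i => WithLp.toLp 2 (A i))
    (WithLp.toLp 2 fun i => WithLp.toLp 2 (B i))

theorem Submodule.span_range_comp_eq_top {R M M₂ ι : Type*} [Semiring R] [AddCommMonoid M]
    [Module R M] [AddCommMonoid M₂] [Module R M₂] {f : M →ₗ[R] M₂} (hf : Function.Surjective f)
    {v : ι → M} (hv : span R (range v) = ⊤) : span R (range (f ∘ v)) = ⊤ := by
  rw [range_comp, span_image, hv, map_top, LinearMap.range_eq_top.mpr hf]

section Matrices

variable {ι m k K : Type*} [Fintype k] [Field K]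

theorem Matrix.mulVec_injective_of_isUnit_transpose_mul [Fintype m] [DecidableEq k]
    {X : Matrix m k K} (hX : IsUnit (Xᵀ * X)) : Function.Injective X.mulVec :=
  fun v w h => mulVec_injective_iff_isUnit.mpr hX (by simp only [← mulVec_mulVec, h])

theorem Matrix.eq_zero_of_mulVec_eq_zero_of_span_eq_top [DecidableEq k] {B : Matrix m k K}
    {v : ι → k → K} (hv : span K (range v) = ⊤) (hB : ∀ i, B *ᵥ v i = 0) : B = 0 :=
  toLin'.injective <| LinearMap.ext_on_range hv fun i => by simpa using hB i

end Matrices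

section Residual

variable {ι m k : Type*} [Fintype k]

noncomputable def residualLinear (X : Matrix m k ℝ) (g : ι → k → ℝ) :
    Matrix k k ℝ →ₗ[ℝ] EuclideanSpace ℝ (ι × m) where
  toFun B := WithLp.toLp 2 fun ij => (X *ᵥ (B *ᵥ g ij.1)) ij.2
  map_add' B C := by ext; simp [add_mulVec, mulVec_add]
  map_smul' c B := by ext; simp [smul_mulVec, mulVec_smul]

theorem norm_residualLinear_add_sq [Fintype ι] [Fintype m] (X : Matrix m k ℝ)
    (g : ι → k → ℝ) (y' : ι → m → ℝ) (B : Matrix k k ℝ) :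
    ‖residualLinear X g B + WithLp.toLp 2 (fun ij => y' ij.1 ij.2)‖ ^ 2 =
      ∑ i, ∑ j, ((X *ᵥ (B *ᵥ g i) + y' i) j) ^ 2 := by
  rw [EuclideanSpace.norm_sq_eq, ← Fintype.sum_prod_type']
  simp [residualLinear]

theorem residualLinear_injective [DecidableEq k] {X : Matrix m k ℝ}
    (hX : Function.Injective X.mulVec) {g : ι → k → ℝ} (hg : span ℝ (range g) = ⊤) :
    Function.Injective (residualLinear X g) := by
  refine (injective_iff_map_eq_zero _).mpr fun B hB => ?_
  refine Matrix.eq_zero_of_mulVec_eq_zero_of_span_eq_top hg fun i => hX ?_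
  ext j
  simpa [residualLinear] using congr($hB (i, j))

end Residual

theorem ltotal_strongly_convex_general {n p N : ℕ} (X : Matrix (Fin n) (Fin p) ℝ)
    (hX : IsUnit (Xᵀ * X)) (y : Fin n → ℝ) (Δ θ₁ : Fin N → Fin p → ℝ)
    (g : Fin N → Fin p → ℝ)
    (hg : ∀ i, g i = (2 : ℝ) • ((Xᵀ * X) *ᵥ (θ₁ i - Δ i)) - (2 : ℝ) • (Xᵀ *ᵥ y))
    (y' : Fin N → Fin n → ℝ)
    (Z : Fin N → Fin p → ℝ)
    (hZ : ∀ i, Z i = θ₁ i - Δ i - (Xᵀ * X)⁻¹ *ᵥ (Xᵀ *ᵥ y))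
    (hspan : Submodule.span ℝ (Set.range Z) = ⊤)
    (ltotal : Matrix (Fin p) (Fin p) ℝ → ℝ)
    (hltotal : ∀ B, ltotal B = (1 / (N : ℝ)) * ∑ i, ∑ j, ((X *ᵥ (B *ᵥ g i) + y' i) j) ^ 2) :
    ∃ m > (0 : ℝ), ConvexOn ℝ Set.univ
      (fun B : Matrix (Fin p) (Fin p) ℝ => ltotal B - (m / 2) * ‖B‖ ^ 2) := by
  let _ := InnerProductSpace.ofNorm ℝ
    (Matrix.frobenius_parallelogram_law (m := Fin p) (n := Fin p))
  have hdet : IsUnit (Xᵀ * X).det := (isUnit_iff_isUnit_det _).mp hX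
  have hnormal : (Xᵀ * X) *ᵥ ((Xᵀ * X)⁻¹ *ᵥ (Xᵀ *ᵥ y)) = Xᵀ *ᵥ y := by
    rw [mulVec_mulVec, mul_nonsing_inv _ hdet, one_mulVec]
  have hg_eq : g = ((2 : ℝ) • (Xᵀ * X)).mulVecLin ∘ Z := funext fun i => by
    rw [Function.comp_apply, mulVecLin_apply, hg, hZ, smul_mulVec, mulVec_sub _ (θ₁ i - Δ i),
      hnormal, smul_sub]
  have hg_span : span ℝ (range g) = ⊤ := by
    refine hg_eq ▸ span_range_comp_eq_top (mulVec_surjective_iff_isUnit.mpr ?_) hspan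
    rw [isUnit_iff_isUnit_det, det_smul]
    exact (two_ne_zero.isUnit.pow _).mul hdet
  have hinj := residualLinear_injective (mulVec_injective_of_isUnit_transpose_mul hX) hg_span
  obtain ⟨K, hK, hL⟩ := (residualLinear X g).injective_iff_antilipschitz.mp hinj
  rcases Nat.eq_zero_or_pos N with rfl | hN
  · -- here `1 / N = 0`, but the injective map `residualLinear X g` has a trivial codomain
    have := hinj.subsingleton
    exact ⟨1, one_pos, convexOn_univ_of_subsingleton _⟩
  refine ⟨1 / N * (2 / K ^ 2), by positivity, strongConvexOn_iff_convex.mp ?_⟩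
  have hloss : ltotal = fun B =>
      1 / N * ‖residualLinear X g B + WithLp.toLp 2 (fun ij => y' ij.1 ij.2)‖ ^ 2 :=
    funext fun B => by rw [hltotal, norm_residualLinear_add_sq]
  rw [hloss]
  exact (strongConvexOn_norm_map_add_sq _ _ hL).const_mul (by positivity)

/-- if the `Zᵢ = θᵢ⁽¹⁾ − Δᵢ − (XᵀX)⁻¹Xᵀy` span ℝᵖ, then the one-step
meta-training loss `l^total(B) = (1/N)Σᵢ ‖XBgᵢ + yᵢ'‖²` is strongly convex on
`ℝ^{p×p}`: there exists `m > 0` such that `B ↦ l^total(B) − (m/2)‖B‖_F²` is convex,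
where `‖·‖_F` is the Frobenius norm. -/
theorem ltotal_strongly_convex {n p N : ℕ} (X : Matrix (Fin n) (Fin p) ℝ)
    (hX : IsUnit (Xᵀ * X)) (y : Fin n → ℝ) (Δ θ₁ : Fin N → Fin p → ℝ)
    (g : Fin N → Fin p → ℝ)
    (hg : ∀ i, g i = (2 : ℝ) • ((Xᵀ * X) *ᵥ (θ₁ i - Δ i)) - (2 : ℝ) • (Xᵀ *ᵥ y))
    (y' : Fin N → Fin n → ℝ)
    (hy' : ∀ i, y' i = -(X *ᵥ θ₁ i) + y + X *ᵥ Δ i)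
    (Z : Fin N → Fin p → ℝ)
    (hZ : ∀ i, Z i = θ₁ i - Δ i - (Xᵀ * X)⁻¹ *ᵥ (Xᵀ *ᵥ y))
    (hspan : Submodule.span ℝ (Set.range Z) = ⊤)
    (ltotal : Matrix (Fin p) (Fin p) ℝ → ℝ)
    (hltotal : ∀ B, ltotal B = (1 / (N : ℝ)) * ∑ i, ∑ j, ((X *ᵥ (B *ᵥ g i) + y' i) j) ^ 2) :
    ∃ m > (0 : ℝ), ConvexOn ℝ Set.univ
      (fun B : Matrix (Fin p) (Fin p) ℝ => ltotal B - (m / 2) * ‖B‖ ^ 2) :=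
  ltotal_strongly_convex_general X hX y Δ θ₁ g hg y' Z hZ hspan ltotal hltotal
end

section
/- Let X ∈ ℝ^{n×p} with XᵀX invertible, y ∈ ℝ^n; for i = 1,…,N let Δ_i, θ_i^{(1)} ∈ ℝ^p, g_i = 2XᵀX(θ_i^{(1)} − Δ_i) − 2Xᵀy, y_i' = −Xθ_i^{(1)} + y + XΔ_i, and Z_i = θ_i^{(1)} − Δ_i − (XᵀX)⁻¹Xᵀy. Define l^total(B) = (1/N)Σ_{i=1}^N ‖XBg_i + y_i'‖². If {Z_1,…,Z_N} spans ℝ^p, then B* = (1/2)(XᵀX)⁻¹ is the unique global minimizer of l^total, with minimum value l* = ‖X(XᵀX)⁻¹Xᵀy − y‖². -/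
open Matrix

/-! With `θ' = (XᵀX)⁻¹Xᵀy` and `r = y - Xθ'` one has `gᵢ = 2XᵀX Zᵢ` and `yᵢ' = r - XZᵢ`, so the
residual of task `i` after the step is `X(2B XᵀX - 1)Zᵢ + r`. The normal equations `Xᵀr = 0` and
Pythagoras give `l^total(B) = (1/N) Σᵢ ‖X(2B XᵀX - 1)Zᵢ‖² + ‖r‖²`. The sum is nonnegative, and it
vanishes iff `(2B XᵀX - 1)Zᵢ = 0` for all `i` (`X` is injective since `XᵀX` is invertible), that
is, iff `2B XᵀX = 1`, because the `Zᵢ` span. -/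

namespace Matrix

theorem eq_zero_of_forall_mulVec_eq_zero_of_span_eq_top {m k R ι : Type*} [Fintype k]
    [CommRing R] {M : Matrix m k R} {Z : ι → k → R}
    (hZ : Submodule.span R (Set.range Z) = ⊤) (h : ∀ i, M *ᵥ Z i = 0) : M = 0 := by
  have hlin : M.mulVecLin = 0 := LinearMap.ext_on_range hZ (by simpa using h)
  exact ext_iff_mulVec.mpr fun v => by simpa using LinearMap.congr_fun hlin v

theorem two_smul_mul_sub_one_eq_zero_iff {k : Type*} [Fintype k] [DecidableEq k]
    {A B : Matrix k k ℝ} (hA : IsUnit A) : (2 : ℝ) • (B * A) - 1 = 0 ↔ B = (1 / 2 : ℝ) • A⁻¹ := by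
  have hdet := (isUnit_iff_isUnit_det A).mp hA
  constructor
  · intro h
    calc B = (1 / 2 : ℝ) • ((2 : ℝ) • (B * A)) * A⁻¹ := by
          rw [smul_smul, smul_mul_assoc, Matrix.mul_assoc, mul_nonsing_inv _ hdet]; norm_num
      _ = (1 / 2 : ℝ) • A⁻¹ := by rw [sub_eq_zero.mp h, smul_mul_assoc, Matrix.one_mul]
  · rintro rfl
    rw [smul_mul_assoc, nonsing_inv_mul _ hdet, smul_smul]
    norm_num

theorem dotProduct_self_nonneg {n : Type*} [Fintype n] (v : n → ℝ) : 0 ≤ v ⬝ᵥ v :=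
  Fintype.sum_nonneg fun _ => mul_self_nonneg _

variable {m k : Type*} [Fintype m] [Fintype k] {X : Matrix m k ℝ}

noncomputable def leastSquaresSolution [DecidableEq k] (X : Matrix m k ℝ) (y : m → ℝ) : k → ℝ :=
  (Xᵀ * X)⁻¹ *ᵥ (Xᵀ *ᵥ y)

theorem gram_mulVec_leastSquaresSolution [DecidableEq k] (hX : IsUnit (Xᵀ * X)) (y : m → ℝ) :
    (Xᵀ * X) *ᵥ leastSquaresSolution X y = Xᵀ *ᵥ y := by
  rw [leastSquaresSolution, mulVec_mulVec, mul_nonsing_inv _ ((isUnit_iff_isUnit_det _).mp hX),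
    one_mulVec]

theorem transpose_mulVec_sub_leastSquaresSolution [DecidableEq k] (hX : IsUnit (Xᵀ * X))
    (y : m → ℝ) : Xᵀ *ᵥ (y - X *ᵥ leastSquaresSolution X y) = 0 := by
  rw [mulVec_sub, mulVec_mulVec, gram_mulVec_leastSquaresSolution hX, sub_self]

theorem mulVec_dotProduct_eq_zero_of_transpose_mulVec_eq_zero {r : m → ℝ} (hr : Xᵀ *ᵥ r = 0)
    (w : k → ℝ) : (X *ᵥ w) ⬝ᵥ r = 0 := by
  rw [dotProduct_comm, dotProduct_mulVec, ← mulVec_transpose, hr, zero_dotProduct]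

theorem dotProduct_self_mulVec_add_of_transpose_mulVec_eq_zero {r : m → ℝ}
    (hr : Xᵀ *ᵥ r = 0) (w : k → ℝ) :
    (X *ᵥ w + r) ⬝ᵥ (X *ᵥ w + r) = (X *ᵥ w) ⬝ᵥ (X *ᵥ w) + r ⬝ᵥ r := by
  have horth := mulVec_dotProduct_eq_zero_of_transpose_mulVec_eq_zero hr w
  rw [add_dotProduct, dotProduct_add, dotProduct_add, horth, dotProduct_comm r, horth]
  ring

theorem eq_zero_of_mulVec_eq_zero_of_isUnit_gram [DecidableEq k] (hX : IsUnit (Xᵀ * X))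
    {v : k → ℝ} (hv : X *ᵥ v = 0) : v = 0 :=
  mulVec_injective_of_isUnit hX <| by rw [← mulVec_mulVec, hv, mulVec_zero, mulVec_zero]

theorem sum_dotProduct_self_mulVec_mulVec_eq_zero_iff [DecidableEq k] {ι : Type*} [Fintype ι]
    (hX : IsUnit (Xᵀ * X)) {Z : ι → k → ℝ} (hZ : Submodule.span ℝ (Set.range Z) = ⊤)
    (M : Matrix k k ℝ) :
    ∑ i, (X *ᵥ (M *ᵥ Z i)) ⬝ᵥ (X *ᵥ (M *ᵥ Z i)) = 0 ↔ M = 0 := by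
  rw [Fintype.sum_eq_zero_iff_of_nonneg fun i => dotProduct_self_nonneg _]
  refine ⟨fun h => eq_zero_of_forall_mulVec_eq_zero_of_span_eq_top hZ fun i => ?_, ?_⟩
  · exact eq_zero_of_mulVec_eq_zero_of_isUnit_gram hX (dotProduct_self_eq_zero.mp (congrFun h i))
  · rintro rfl
    ext i
    simp

end Matrix

section MetaLearning

variable {m k : Type*} [Fintype m] [Fintype k] [DecidableEq k] {X : Matrix m k ℝ}

theorem oneStep_residual_eq (hX : IsUnit (Xᵀ * X)) (y : m → ℝ) (B : Matrix k k ℝ)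
    (θ Δ : k → ℝ) :
    X *ᵥ (B *ᵥ ((2 : ℝ) • ((Xᵀ * X) *ᵥ (θ - Δ)) - (2 : ℝ) • (Xᵀ *ᵥ y))) +
        (-(X *ᵥ θ) + y + X *ᵥ Δ) =
      X *ᵥ (((2 : ℝ) • (B * (Xᵀ * X)) - 1) *ᵥ (θ - Δ - leastSquaresSolution X y)) +
        (y - X *ᵥ leastSquaresSolution X y) := by
  rw [← gram_mulVec_leastSquaresSolution hX y]
  simp only [mulVec_sub, mulVec_smul, sub_mulVec, smul_mulVec, one_mulVec, mulVec_mulVec]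
  module

theorem sum_sq_oneStep_residual (hX : IsUnit (Xᵀ * X)) (y : m → ℝ) (B : Matrix k k ℝ)
    (θ Δ : k → ℝ) :
    ∑ j, ((X *ᵥ (B *ᵥ ((2 : ℝ) • ((Xᵀ * X) *ᵥ (θ - Δ)) - (2 : ℝ) • (Xᵀ *ᵥ y))) +
        (-(X *ᵥ θ) + y + X *ᵥ Δ)) j) ^ 2 =
      (X *ᵥ (((2 : ℝ) • (B * (Xᵀ * X)) - 1) *ᵥ (θ - Δ - leastSquaresSolution X y))) ⬝ᵥ
          (X *ᵥ (((2 : ℝ) • (B * (Xᵀ * X)) - 1) *ᵥ (θ - Δ - leastSquaresSolution X y))) +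
        (y - X *ᵥ leastSquaresSolution X y) ⬝ᵥ (y - X *ᵥ leastSquaresSolution X y) := by
  rw [oneStep_residual_eq hX, ← dotProduct_self_mulVec_add_of_transpose_mulVec_eq_zero
    (transpose_mulVec_sub_leastSquaresSolution hX y)]
  simp only [dotProduct, sq]

end MetaLearning

/-- if the `Zᵢ = θᵢ⁽¹⁾ − Δᵢ − (XᵀX)⁻¹Xᵀy` span ℝᵖ, then
`B* = (1/2)(XᵀX)⁻¹` is the unique global minimizer of the one-step meta-training loss
`l^total(B) = (1/N)Σᵢ ‖XBgᵢ + yᵢ'‖²`, with minimum value `l* = ‖X(XᵀX)⁻¹Xᵀy − y‖²`. -/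
theorem Bstar_unique_global_minimizer {n p N : ℕ} (hN : 0 < N)
    (X : Matrix (Fin n) (Fin p) ℝ) (hX : IsUnit (Xᵀ * X)) (y : Fin n → ℝ)
    (Δ θ₁ : Fin N → Fin p → ℝ)
    (g : Fin N → Fin p → ℝ)
    (hg : ∀ i, g i = (2 : ℝ) • ((Xᵀ * X) *ᵥ (θ₁ i - Δ i)) - (2 : ℝ) • (Xᵀ *ᵥ y))
    (y' : Fin N → Fin n → ℝ)
    (hy' : ∀ i, y' i = -(X *ᵥ θ₁ i) + y + X *ᵥ Δ i)
    (Z : Fin N → Fin p → ℝ)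
    (hZ : ∀ i, Z i = θ₁ i - Δ i - (Xᵀ * X)⁻¹ *ᵥ (Xᵀ *ᵥ y))
    (hspan : Submodule.span ℝ (Set.range Z) = ⊤)
    (ltotal : Matrix (Fin p) (Fin p) ℝ → ℝ)
    (hltotal : ∀ B, ltotal B = (1 / (N : ℝ)) * ∑ i, ∑ j, ((X *ᵥ (B *ᵥ g i) + y' i) j) ^ 2)
    (lstar : ℝ)
    (hlstar : lstar = ∑ j, ((X *ᵥ ((Xᵀ * X)⁻¹ *ᵥ (Xᵀ *ᵥ y)) - y) j) ^ 2)
    (Bstar : Matrix (Fin p) (Fin p) ℝ) (hBstar : Bstar = ((1 : ℝ) / 2) • (Xᵀ * X)⁻¹) :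
    (∀ B, ltotal Bstar ≤ ltotal B) ∧ (∀ B, ltotal B = ltotal Bstar → B = Bstar) ∧
      ltotal Bstar = lstar := by
  set r := y - X *ᵥ leastSquaresSolution X y with hr
  set excess : Matrix (Fin p) (Fin p) ℝ → ℝ := fun B =>
    ∑ i, (X *ᵥ (((2 : ℝ) • (B * (Xᵀ * X)) - 1) *ᵥ Z i)) ⬝ᵥ
      (X *ᵥ (((2 : ℝ) • (B * (Xᵀ * X)) - 1) *ᵥ Z i))
  have hloss : ∀ B, ltotal B = (1 / (N : ℝ)) * excess B + r ⬝ᵥ r := by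
    intro B
    have hZ' : ∀ i, Z i = θ₁ i - Δ i - leastSquaresSolution X y := hZ
    simp only [hltotal, hg, hy', sum_sq_oneStep_residual hX, ← hZ', ← hr, Finset.sum_add_distrib,
      Finset.sum_const, Finset.card_univ, Fintype.card_fin, nsmul_eq_mul, excess]
    field_simp
  have hexcess_eq_zero_iff : ∀ B, excess B = 0 ↔ B = Bstar := fun B => by
    rw [sum_dotProduct_self_mulVec_mulVec_eq_zero_iff hX hspan, two_smul_mul_sub_one_eq_zero_iff hX,
      hBstar]
  have hexcess_nonneg : ∀ B, 0 ≤ excess B := fun B =>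
    Fintype.sum_nonneg fun _ => dotProduct_self_nonneg _
  have hmin : ltotal Bstar = r ⬝ᵥ r := by
    rw [hloss, (hexcess_eq_zero_iff Bstar).mpr rfl, mul_zero, zero_add]
  refine ⟨fun B => ?_, fun B hB => ?_, ?_⟩
  · rw [hmin, hloss B]
    exact le_add_of_nonneg_left (mul_nonneg (by positivity) (hexcess_nonneg B))
  · rw [hmin, hloss B] at hB
    exact (hexcess_eq_zero_iff B).mp (by simpa [hN.ne'] using hB)
  · rw [hmin, hlstar, ← neg_sub]
    simp only [Pi.neg_apply, neg_mul_neg, dotProduct, sq]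
    rfl
end

section
/- Let X ∈ ℝ^{n×p} with XᵀX invertible, y ∈ ℝ^n; for i = 1,…,N let Δ_i, θ_i^{(1)} ∈ ℝ^p, g_i = 2XᵀX(θ_i^{(1)} − Δ_i) − 2Xᵀy, y_i' = −Xθ_i^{(1)} + y + XΔ_i, and Z_i = θ_i^{(1)} − Δ_i − (XᵀX)⁻¹Xᵀy. Define l^total(B) = (1/N)Σ_{i=1}^N ‖XBg_i + y_i'‖², whose gradient is ∇l^total(B) = (2/N)Σ_{i=1}^N Xᵀ(XBg_i + y_i') g_iᵀ, and let B* = (1/2)(XᵀX)⁻¹. Suppose {Z_1,…,Z_N} spans ℝ^p. Then there exist η > 0, ε ∈ (0,1), and C ≥ 0 such that the gradient-descent iterates B^{(k+1)} = B^{(k)} − η·∇l^total(B^{(k)}), started from any fixed B^{(1)} ∈ ℝ^{p×p}, satisfy ‖B^{(k)} − B*‖_F² ≤ C(1 − ε)^k for all k ≥ 1. -/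
open Finset Matrix

lemma contraction_of_posdef {V : Type*} [NormedAddCommGroup V] [InnerProductSpace ℝ V]
    [FiniteDimensional ℝ V] [Nontrivial V] (T : V →ₗ[ℝ] V)
    (hpos : ∀ v : V, v ≠ 0 → 0 < (inner ℝ (T v) v : ℝ)) :
    ∃ η > (0:ℝ), ∃ ε ∈ Set.Ioo (0:ℝ) 1, ∀ v : V, ‖v - η • T v‖^2 ≤ (1-ε) * ‖v‖^2 := by
  let Tc : V →L[ℝ] V := LinearMap.toContinuousLinearMap T
  set M : ℝ := ‖Tc‖ with hM
  have hMnn : 0 ≤ M := norm_nonneg _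
  have hf : Continuous (fun v : V => (inner ℝ (T v) v : ℝ)) := by
    have : Continuous (fun v : V => (inner ℝ (Tc v) v : ℝ)) := Continuous.inner Tc.continuous continuous_id
    exact this
  have hSne : (Metric.sphere (0:V) 1).Nonempty := NormedSpace.sphere_nonempty.mpr zero_le_one
  obtain ⟨v₀, hv₀S, hmin⟩ := (isCompact_sphere (0:V) 1).exists_isMinOn hSne hf.continuousOn
  have hv₀ : ‖v₀‖ = 1 := by simpa using hv₀S
  have hv₀ne : v₀ ≠ 0 := by intro h; rw [h] at hv₀; simp at hv₀
  set c : ℝ := inner ℝ (T v₀) v₀ with hc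
  have hcpos : 0 < c := hpos v₀ hv₀ne
  have hlb : ∀ v : V, c * ‖v‖^2 ≤ inner ℝ (T v) v := by
    intro v
    rcases eq_or_ne v 0 with rfl | hv
    · simp
    · have hnv : (0:ℝ) < ‖v‖ := norm_pos_iff.mpr hv
      set u : V := ‖v‖⁻¹ • v with hu
      have huS : u ∈ Metric.sphere (0:V) 1 := by
        simp [hu, norm_smul, abs_of_pos (inv_pos.mpr hnv), inv_mul_cancel₀ hnv.ne']
      have := hmin huS
      have hval : (inner ℝ (T u) u : ℝ) = ‖v‖⁻¹^2 * inner ℝ (T v) v := by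
        rw [hu, _root_.map_smul, real_inner_smul_left, real_inner_smul_right]; ring
      have h2 : c ≤ ‖v‖⁻¹^2 * inner ℝ (T v) v := by
        simpa [hval] using this
      have := mul_le_mul_of_nonneg_left h2 (sq_nonneg ‖v‖)
      calc c * ‖v‖^2 = ‖v‖^2 * c := by ring
        _ ≤ ‖v‖^2 * (‖v‖⁻¹^2 * inner ℝ (T v) v) := this
        _ = inner ℝ (T v) v := by
            field_simp
  have hub : ∀ v : V, ‖T v‖ ≤ M * ‖v‖ := fun v => Tc.le_opNorm v
  have hcM : c ≤ M := by
    have h1 : (inner ℝ (T v₀) v₀ : ℝ) ≤ ‖T v₀‖ * ‖v₀‖ := real_inner_le_norm _ _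
    have h2 := hub v₀
    rw [hv₀] at h1 h2
    simpa using h1.trans (by simpa using h2)
  have hD : (0:ℝ) < M^2 + 1 := by positivity
  refine ⟨c / (M^2+1), by positivity, c^2 / (M^2+1), ⟨by positivity, ?_⟩, ?_⟩
  · rw [div_lt_one hD]
    nlinarith
  · intro v
    set η := c / (M^2+1) with hη
    have hηpos : 0 < η := by positivity
    have keq : 2*η*c - η^2*M^2 - c^2/(M^2+1) = c^2/(M^2+1)^2 := by
      rw [hη]; field_simp; ring
    have key : c^2/(M^2+1) ≤ 2*η*c - η^2*M^2 := by
      nlinarith [div_nonneg (sq_nonneg c) (sq_nonneg (M^2+1))]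
    have hexp : ‖v - η • T v‖^2 = ‖v‖^2 - 2*η*(inner ℝ (T v) v) + η^2 * ‖T v‖^2 := by
      rw [norm_sub_sq_real, real_inner_smul_right, norm_smul, real_inner_comm]
      rw [Real.norm_eq_abs, abs_of_pos hηpos]
      ring
    have hMsq : ‖T v‖^2 ≤ M^2 * ‖v‖^2 := by
      have := hub v
      nlinarith [norm_nonneg (T v), norm_nonneg v]
    rw [hexp]
    nlinarith [hlb v, sq_nonneg ‖v‖, mul_le_mul_of_nonneg_left hMsq (sq_nonneg η),
      mul_le_mul_of_nonneg_left (hlb v) (mul_pos two_pos hηpos).le,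
      mul_le_mul_of_nonneg_right key (sq_nonneg ‖v‖)]


/-- if the `Zᵢ = θᵢ⁽¹⁾ − Δᵢ − (XᵀX)⁻¹Xᵀy` span ℝᵖ, then there are
`η > 0` and `ε ∈ (0,1)` such that, from any fixed initial meta-parameter `B⁽¹⁾`,
there is `C ≥ 0` so that the gradient-descent iterates
`B⁽ᵏ⁺¹⁾ = B⁽ᵏ⁾ − η∇l^total(B⁽ᵏ⁾)` satisfy `‖B⁽ᵏ⁾ − B*‖_F² ≤ C(1 − ε)ᵏ` for all `k ≥ 1`,
where `B* = (1/2)(XᵀX)⁻¹` and `∇l^total(B) = (2/N)Σᵢ Xᵀ(XBgᵢ + yᵢ')gᵢᵀ`. -/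
theorem meta_gd_linear_convergence_params {n p N : ℕ} (hN : 0 < N)
    (X : Matrix (Fin n) (Fin p) ℝ) (hX : IsUnit (Xᵀ * X)) (y : Fin n → ℝ)
    (Δ θ₁ : Fin N → Fin p → ℝ)
    (g : Fin N → Fin p → ℝ)
    (hg : ∀ i, g i = (2 : ℝ) • ((Xᵀ * X) *ᵥ (θ₁ i - Δ i)) - (2 : ℝ) • (Xᵀ *ᵥ y))
    (y' : Fin N → Fin n → ℝ)
    (hy' : ∀ i, y' i = -(X *ᵥ θ₁ i) + y + X *ᵥ Δ i)
    (Z : Fin N → Fin p → ℝ)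
    (hZ : ∀ i, Z i = θ₁ i - Δ i - (Xᵀ * X)⁻¹ *ᵥ (Xᵀ *ᵥ y))
    (hspan : Submodule.span ℝ (Set.range Z) = ⊤)
    (gradTotal : Matrix (Fin p) (Fin p) ℝ → Matrix (Fin p) (Fin p) ℝ)
    (hgradTotal : ∀ B, gradTotal B =
      ((2 : ℝ) / (N : ℝ)) • ∑ i, vecMulVec (Xᵀ *ᵥ (X *ᵥ (B *ᵥ g i) + y' i)) (g i))
    (Bstar : Matrix (Fin p) (Fin p) ℝ) (hBstar : Bstar = ((1 : ℝ) / 2) • (Xᵀ * X)⁻¹) :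
    ∃ η > (0 : ℝ), ∃ ε ∈ Set.Ioo (0 : ℝ) 1,
      ∀ B₁ : Matrix (Fin p) (Fin p) ℝ, ∃ C ≥ (0 : ℝ),
        ∀ B : ℕ → Matrix (Fin p) (Fin p) ℝ, B 1 = B₁ →
          (∀ k ≥ 1, B (k + 1) = B k - η • gradTotal (B k)) →
          ∀ k ≥ 1, (∑ a, ∑ b, ((B k - Bstar) a b) ^ 2) ≤ C * (1 - ε) ^ k := by

  rcases Nat.eq_zero_or_pos p with hp | hp
  · subst hp
    refine ⟨1, one_pos, 1/2, ⟨by norm_num, by norm_num⟩,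
      fun B₁ => ⟨0, le_refl 0, fun B hB1 hrec k hk => ?_⟩⟩
    simp
  haveI : Nonempty (Fin p) := ⟨⟨0, hp⟩⟩
  have hdet : IsUnit (Xᵀ * X).det := (Matrix.isUnit_iff_isUnit_det _).mp hX
  -- the Gram matrix
  set G : Matrix (Fin p) (Fin p) ℝ := ∑ i, vecMulVec (g i) (g i) with hG
  -- the linear map whose iteration is gradient descent
  set Lm : Matrix (Fin p) (Fin p) ℝ →ₗ[ℝ] Matrix (Fin p) (Fin p) ℝ :=
    ((2:ℝ)/(N:ℝ)) • ((LinearMap.mulRight ℝ G).comp (LinearMap.mulLeft ℝ (Xᵀ * X))) with hLmdef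
  have hLm : ∀ E, Lm E = ((2:ℝ)/(N:ℝ)) • ((Xᵀ * X) * E * G) := fun E => rfl
  have hMvv : ∀ (M : Matrix (Fin p) (Fin p) ℝ) (v w : Fin p → ℝ),
      M * vecMulVec v w = vecMulVec (M *ᵥ v) w := by
    intro M v w
    ext a b; simp [Matrix.mul_apply, vecMulVec_apply, mulVec, dotProduct, Finset.sum_mul, mul_assoc]
  -- the gradient is `Lm` applied to the displacement from `Bstar`
  have grad_eq : ∀ Bm, gradTotal Bm = Lm (Bm - Bstar) := by
    intro Bm
    have per_i : ∀ i, Xᵀ *ᵥ (X *ᵥ (Bm *ᵥ g i) + y' i) = ((Xᵀ * X) * (Bm - Bstar)) *ᵥ g i := by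
      intro i
      have hABstar : (Xᵀ * X) * Bstar = ((1:ℝ)/2) • (1 : Matrix (Fin p) (Fin p) ℝ) := by
        rw [hBstar, Matrix.mul_smul, Matrix.mul_nonsing_inv _ hdet]
      have h1 : ((Xᵀ * X) * Bstar) *ᵥ g i = ((1:ℝ)/2) • g i := by
        rw [hABstar, Matrix.smul_mulVec, Matrix.one_mulVec]
      have h2 : Xᵀ *ᵥ y' i = -(((1:ℝ)/2) • g i) := by
        rw [hy' i, hg i]
        simp only [Matrix.mulVec_add, Matrix.mulVec_neg, Matrix.mulVec_mulVec, smul_sub,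
          smul_smul, Matrix.mulVec_smul, Matrix.mulVec_sub]
        norm_num
        abel
      rw [Matrix.mul_sub, Matrix.sub_mulVec, Matrix.mulVec_add, Matrix.mulVec_mulVec,
        Matrix.mulVec_mulVec, h1, h2]
      abel
    rw [hgradTotal, hLm]
    congr 1
    rw [hG, Matrix.mul_sum]
    refine Finset.sum_congr rfl fun i _ => ?_
    rw [per_i i, hMvv]
  -- the quadratic form of `Lm` (up to the positive factor) is a sum of squares
  have qid : ∀ E : Matrix (Fin p) (Fin p) ℝ,
      (∑ a, ∑ b, (((Xᵀ * X) * E * G) a b) * E a b)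
        = ∑ i, (X *ᵥ (E *ᵥ g i)) ⬝ᵥ (X *ᵥ (E *ᵥ g i)) := by
    intro E
    have key : ∀ (u v : Fin p → ℝ), (∑ a, ∑ b, (vecMulVec u v) a b * E a b) = u ⬝ᵥ (E *ᵥ v) := by
      intro u v
      simp only [vecMulVec_apply, dotProduct, mulVec, Finset.mul_sum]
      refine Finset.sum_congr rfl fun a _ => Finset.sum_congr rfl fun b _ => by ring
    rw [hG, Matrix.mul_sum]
    simp only [Matrix.sum_apply, Finset.sum_mul]
    rw [Finset.sum_congr rfl (fun a _ => Finset.sum_comm)]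
    rw [Finset.sum_comm]
    refine Finset.sum_congr rfl fun i _ => ?_
    rw [hMvv, key]
    have h1 : (Xᵀ * X * E) *ᵥ g i = Xᵀ *ᵥ (X *ᵥ (E *ᵥ g i)) := by
      simp [Matrix.mulVec_mulVec, Matrix.mul_assoc]
    rw [h1, Matrix.mulVec_transpose]
    exact (Matrix.dotProduct_mulVec _ X _).symm
  -- the `g i` span
  have hgspan : Submodule.span ℝ (Set.range g) = ⊤ := by
    set F : (Fin p → ℝ) →ₗ[ℝ] (Fin p → ℝ) := (2 : ℝ) • Matrix.mulVecLin (Xᵀ * X) with hF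
    have hgZ : ∀ i, g i = F (Z i) := by
      intro i
      rw [hg, hZ, hF]
      simp only [LinearMap.smul_apply, Matrix.mulVecLin_apply, Matrix.mulVec_sub, smul_sub,
        Matrix.mulVec_mulVec, Matrix.mul_nonsing_inv _ hdet, Matrix.one_mulVec]
      rw [← Matrix.mul_assoc, Matrix.mul_nonsing_inv _ hdet, Matrix.one_mul]
    have hFsurj : Function.Surjective F := by
      intro v
      refine ⟨(Xᵀ * X)⁻¹ *ᵥ ((1/2 : ℝ) • v), ?_⟩
      rw [hF]
      simp only [LinearMap.smul_apply, Matrix.mulVecLin_apply, Matrix.mulVec_mulVec,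
        Matrix.mul_nonsing_inv _ hdet, Matrix.one_mulVec, smul_smul]
      norm_num
    have : Set.range g = F '' Set.range Z := by
      ext v
      simp only [Set.mem_range, Set.mem_image]
      constructor
      · rintro ⟨i, rfl⟩; exact ⟨Z i, ⟨i, rfl⟩, (hgZ i).symm⟩
      · rintro ⟨w, ⟨i, rfl⟩, rfl⟩; exact ⟨i, hgZ i⟩
    rw [this, ← Submodule.map_span, hspan, Submodule.map_top, LinearMap.range_eq_top]
    exact hFsurj
  -- move to Euclidean space
  set e : Matrix (Fin p) (Fin p) ℝ ≃ₗ[ℝ] EuclideanSpace ℝ (Fin p × Fin p) :=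
    (LinearEquiv.curry ℝ ℝ (Fin p) (Fin p)).symm.trans (WithLp.linearEquiv 2 ℝ _).symm with he
  have happ : ∀ (E : Matrix (Fin p) (Fin p) ℝ) (a b : Fin p), e E (a, b) = E a b :=
    fun _ _ _ => rfl
  have hnorm : ∀ E : Matrix (Fin p) (Fin p) ℝ, ‖e E‖^2 = ∑ a, ∑ b, (E a b)^2 := by
    intro E
    rw [EuclideanSpace.norm_eq, Real.sq_sqrt (by positivity)]
    rw [show (∑ a, ∑ b, (E a b)^2) = ∑ ab : Fin p × Fin p, (E ab.1 ab.2)^2 from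
      (Fintype.sum_prod_type (fun ab : Fin p × Fin p => (E ab.1 ab.2)^2)).symm]
    refine Finset.sum_congr rfl fun ab _ => ?_
    rw [happ E ab.1 ab.2]
    simp [sq_abs]
  have hinner : ∀ F E : Matrix (Fin p) (Fin p) ℝ,
      (inner ℝ (e F) (e E) : ℝ) = ∑ a, ∑ b, F a b * E a b := by
    intro F E
    rw [PiLp.inner_apply]
    rw [show (∑ a, ∑ b, F a b * E a b) = ∑ ab : Fin p × Fin p, F ab.1 ab.2 * E ab.1 ab.2 from
      (Fintype.sum_prod_type (fun ab : Fin p × Fin p => F ab.1 ab.2 * E ab.1 ab.2)).symm]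
    refine Finset.sum_congr rfl fun ab _ => ?_
    rw [happ F ab.1 ab.2, happ E ab.1 ab.2]
    simp [RCLike.inner_apply, mul_comm]
  set T : EuclideanSpace ℝ (Fin p × Fin p) →ₗ[ℝ] EuclideanSpace ℝ (Fin p × Fin p) :=
    (e.toLinearMap.comp Lm).comp e.symm.toLinearMap with hT
  have hTe : ∀ E : Matrix (Fin p) (Fin p) ℝ, T (e E) = e (Lm E) := by
    intro E
    rw [hT]
    simp only [LinearMap.comp_apply, LinearEquiv.coe_coe, LinearEquiv.symm_apply_apply]
  haveI : Nontrivial (EuclideanSpace ℝ (Fin p × Fin p)) := e.symm.toEquiv.nontrivial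
  -- positivity of the quadratic form
  have hpos : ∀ v : EuclideanSpace ℝ (Fin p × Fin p), v ≠ 0 → 0 < (inner ℝ (T v) v : ℝ) := by
    intro v hv
    set E : Matrix (Fin p) (Fin p) ℝ := e.symm v with hE
    have hvE : v = e E := by rw [hE, e.apply_symm_apply]
    have hEne : E ≠ 0 := by
      intro h; apply hv; rw [hvE, h, map_zero]
    have hform : (inner ℝ (T v) v : ℝ)
        = ((2:ℝ)/(N:ℝ)) * ∑ i, (X *ᵥ (E *ᵥ g i)) ⬝ᵥ (X *ᵥ (E *ᵥ g i)) := by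
      rw [hvE, hTe, hinner, ← qid E, hLm]
      simp only [Matrix.smul_apply, smul_eq_mul, Finset.mul_sum]
      exact Finset.sum_congr rfl fun a _ => Finset.sum_congr rfl fun b _ => by ring
    rw [hform]
    have hNpos : (0:ℝ) < (2:ℝ)/(N:ℝ) := by positivity
    refine mul_pos hNpos ?_
    -- some `E *ᵥ g i` is nonzero
    have hex : ∃ i, E *ᵥ g i ≠ 0 := by
      by_contra h
      push_neg at h
      apply hEne
      have hall : ∀ w : Fin p → ℝ, E *ᵥ w = 0 := by
        intro w
        have hw : w ∈ Submodule.span ℝ (Set.range g) := by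
          have : w ∈ (⊤ : Submodule ℝ (Fin p → ℝ)) := Submodule.mem_top
          rwa [← hgspan] at this
        induction hw using Submodule.span_induction with
        | mem x hx => obtain ⟨i, rfl⟩ := hx; exact h i
        | zero => simp
        | add x y _ _ hx hy => rw [Matrix.mulVec_add, hx, hy, add_zero]
        | smul a x _ hx => rw [Matrix.mulVec_smul, hx, smul_zero]
      ext a b
      have := congrFun (hall (Pi.single b 1)) a
      simpa [Matrix.mulVec_single] using this
    obtain ⟨i, hi⟩ := hex
    have hXne : X *ᵥ (E *ᵥ g i) ≠ 0 := by
      intro h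
      apply hi
      have h2 : (Xᵀ * X) *ᵥ (E *ᵥ g i) = 0 := by
        rw [← Matrix.mulVec_mulVec, h, Matrix.mulVec_zero]
      have h3 := congrArg (fun w => (Xᵀ * X)⁻¹ *ᵥ w) h2
      simpa [Matrix.mulVec_mulVec, ← Matrix.mul_assoc, Matrix.nonsing_inv_mul _ hdet,
        Matrix.one_mul, Matrix.one_mulVec, Matrix.mulVec_zero] using h3
    refine Finset.sum_pos' (fun j _ => ?_) ⟨i, Finset.mem_univ i, ?_⟩
    · exact Finset.sum_nonneg fun l _ => mul_self_nonneg _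
    · have hne : (X *ᵥ (E *ᵥ g i)) ⬝ᵥ (X *ᵥ (E *ᵥ g i)) ≠ 0 := by
        intro h0; exact hXne (dotProduct_self_eq_zero.mp h0)
      have hge : 0 ≤ (X *ᵥ (E *ᵥ g i)) ⬝ᵥ (X *ᵥ (E *ᵥ g i)) :=
        Finset.sum_nonneg fun l _ => mul_self_nonneg _
      exact lt_of_le_of_ne hge (Ne.symm hne)
  obtain ⟨η, hη, ε, hε, hcontr⟩ := contraction_of_posdef T hpos
  have hε1 : (0:ℝ) < 1 - ε := by have := hε.2; linarith
  refine ⟨η, hη, ε, hε, fun B₁ => ?_⟩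
  refine ⟨‖e (B₁ - Bstar)‖^2 / (1-ε), div_nonneg (sq_nonneg _) hε1.le, fun B hB1 hrec => ?_⟩
  have hstep : ∀ k, 1 ≤ k → e (B (k+1) - Bstar)
      = e (B k - Bstar) - η • T (e (B k - Bstar)) := by
    intro k hk
    rw [hrec k hk, grad_eq,
      show B k - η • Lm (B k - Bstar) - Bstar = (B k - Bstar) - η • Lm (B k - Bstar) from
        sub_right_comm _ _ _,
      map_sub, _root_.map_smul, hTe]
  have key : ∀ k, 1 ≤ k →
      ‖e (B k - Bstar)‖^2 ≤ (‖e (B₁ - Bstar)‖^2/(1-ε)) * (1-ε)^k := by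
    intro k hk
    induction k, hk using Nat.le_induction with
    | base =>
        rw [hB1, pow_one, div_mul_cancel₀ _ hε1.ne']
    | succ k hk ih =>
        rw [hstep k hk]
        calc ‖e (B k - Bstar) - η • T (e (B k - Bstar))‖^2
            ≤ (1-ε) * ‖e (B k - Bstar)‖^2 := hcontr _
          _ ≤ (1-ε) * ((‖e (B₁ - Bstar)‖^2/(1-ε)) * (1-ε)^k) :=
              mul_le_mul_of_nonneg_left ih hε1.le
          _ = (‖e (B₁ - Bstar)‖^2/(1-ε)) * (1-ε)^(k+1) := by ring
  intro k hk
  rw [← hnorm]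
  exact key k hk
end

section
/- (Theorem 1) Let X ∈ ℝ^{n×p} with XᵀX invertible, y ∈ ℝ^n; for i = 1,…,N let Δ_i, θ_i^{(1)} ∈ ℝ^p, g_i = 2XᵀX(θ_i^{(1)} − Δ_i) − 2Xᵀy, y_i' = −Xθ_i^{(1)} + y + XΔ_i, and Z_i = θ_i^{(1)} − Δ_i − (XᵀX)⁻¹Xᵀy, and suppose {Z_1,…,Z_N} spans ℝ^p. Define l^total(B) = (1/N)Σ_{i=1}^N ‖XBg_i + y_i'‖² with gradient ∇l^total(B) = (2/N)Σ_i Xᵀ(XBg_i + y_i') g_iᵀ, and let l* = ‖X(XᵀX)⁻¹Xᵀy − y‖². Fix a target task given by Δ_t ∈ ℝ^p and θ_t^{(1)} ∈ ℝ^p, with target gradient g_t = 2XᵀX(θ_t^{(1)} − Δ_t) − 2Xᵀy, and define the one-step target loss l_target^{(k)} = ‖X(θ_t^{(1)} − B^{(k)} g_t) − (y + XΔ_t)‖². Then there exist η > 0, ε ∈ (0,1), and C ≥ 0 such that the gradient-descent meta-iterates B^{(k+1)} = B^{(k)} − η·∇l^total(B^{(k)}), from any fixed B^{(1)} ∈ ℝ^{p×p},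 satisfy l_target^{(k)} − l* ≤ C(1 − ε)^k for all k ≥ 1. -/
open Finset Matrix
open scoped RealInnerProductSpace
set_option maxHeartbeats 1000000

lemma contraction_step {E : Type*} [NormedAddCommGroup E] [InnerProductSpace ℝ E]
    [FiniteDimensional ℝ E] (H : E →ₗ[ℝ] E)
    (hpos : ∀ x : E, x ≠ 0 → 0 < ⟪H x, x⟫) :
    ∃ η > (0:ℝ), ∃ ε ∈ Set.Ioo (0:ℝ) 1, ∀ x : E,
      ‖x - η • H x‖ ^ 2 ≤ (1 - ε) * ‖x‖ ^ 2 := by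
  by_cases hE : ∀ x : E, x = 0
  · refine ⟨1, one_pos, 1/2, by norm_num, fun x => ?_⟩
    rw [hE (x - 1 • H x), hE x]
    simp
  push_neg at hE
  obtain ⟨x₀, hx₀⟩ := hE
  set Hc : E →L[ℝ] E := LinearMap.toContinuousLinearMap H with hHc
  have hsph : IsCompact (Metric.sphere (0:E) 1) := isCompact_sphere 0 1
  have hne : (Metric.sphere (0:E) 1).Nonempty := by
    refine ⟨‖x₀‖⁻¹ • x₀, ?_⟩
    simp [norm_smul, abs_of_nonneg, inv_mul_cancel₀ (norm_ne_zero_iff.mpr hx₀)]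
  have hqc : ContinuousOn (fun x : E => ⟪H x, x⟫) (Metric.sphere 0 1) :=
    (Hc.continuous.inner continuous_id).continuousOn
  obtain ⟨xm, hxm, hmin⟩ := hsph.exists_isMinOn hne hqc
  set α : ℝ := ⟪H xm, xm⟫ with hα
  have hxm1 : ‖xm‖ = 1 := by simpa using hxm
  have hαpos : 0 < α := hpos xm (by intro h; rw [h] at hxm1; simp at hxm1)
  set β : ℝ := ‖Hc‖ + 1 with hβ
  have hβpos : 0 < β := by positivity
  have hHb : ∀ x : E, ‖H x‖ ≤ β * ‖x‖ := by
    intro x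
    calc ‖H x‖ = ‖Hc x‖ := rfl
    _ ≤ ‖Hc‖ * ‖x‖ := Hc.le_opNorm x
    _ ≤ β * ‖x‖ := by
        apply mul_le_mul_of_nonneg_right _ (norm_nonneg x)
        simp [hβ]
  have hαβ : α ≤ β := by
    calc α ≤ ‖H xm‖ * ‖xm‖ := real_inner_le_norm _ _
    _ ≤ β * ‖xm‖ * ‖xm‖ := mul_le_mul_of_nonneg_right (hHb xm) (norm_nonneg xm)
    _ = β := by rw [hxm1]; ring
  have hq : ∀ x : E, α * ‖x‖ ^ 2 ≤ ⟪H x, x⟫ := by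
    intro x
    rcases eq_or_ne x 0 with h | h
    · simp [h]
    · have hn : ‖x‖ ≠ 0 := norm_ne_zero_iff.mpr h
      have hxs : (‖x‖⁻¹ • x) ∈ Metric.sphere (0:E) 1 := by
        simp [norm_smul, abs_of_nonneg, inv_mul_cancel₀ hn]
      have hle : α ≤ ⟪H (‖x‖⁻¹ • x), ‖x‖⁻¹ • x⟫ := hmin hxs
      have hscale : ⟪H (‖x‖⁻¹ • x), ‖x‖⁻¹ • x⟫ = ‖x‖⁻¹ * ‖x‖⁻¹ * ⟪H x, x⟫ := by
        rw [H.map_smul, real_inner_smul_left, real_inner_smul_right]; ring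
      rw [hscale] at hle
      have h2 : α * ‖x‖ ^ 2 ≤ (‖x‖⁻¹ * ‖x‖⁻¹ * ⟪H x, x⟫) * ‖x‖ ^ 2 :=
        mul_le_mul_of_nonneg_right hle (by positivity)
      calc α * ‖x‖ ^ 2 ≤ (‖x‖⁻¹ * ‖x‖⁻¹ * ⟪H x, x⟫) * ‖x‖ ^ 2 := h2
      _ = ⟪H x, x⟫ := by
          rw [sq]
          field_simp
  clear_value α β
  clear hα hβ hmin hxm hxm1 hqc hne hsph hHc
  refine ⟨α / β ^ 2, by positivity, α ^ 2 / (2 * β ^ 2), ⟨by positivity, ?_⟩, ?_⟩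
  · rw [div_lt_one (by positivity)]; nlinarith
  intro x
  have h1 : ‖H x‖ ^ 2 ≤ β ^ 2 * ‖x‖ ^ 2 := by
    have := hHb x
    nlinarith [norm_nonneg (H x), norm_nonneg x]
  have hexp : ‖x - (α / β ^ 2) • H x‖ ^ 2
      = ‖x‖ ^ 2 - 2 * (α / β ^ 2) * ⟪H x, x⟫ + (α / β ^ 2) ^ 2 * ‖H x‖ ^ 2 := by
    rw [norm_sub_sq_real, real_inner_smul_right, norm_smul, real_inner_comm, mul_pow,
      Real.norm_eq_abs, sq_abs]
    ring
  have t1 : 2 * (α / β ^ 2) * (α * ‖x‖ ^ 2) ≤ 2 * (α / β ^ 2) * ⟪H x, x⟫ :=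
    mul_le_mul_of_nonneg_left (hq x) (by positivity)
  have t2 : (α / β ^ 2) ^ 2 * ‖H x‖ ^ 2 ≤ (α / β ^ 2) ^ 2 * (β ^ 2 * ‖x‖ ^ 2) :=
    mul_le_mul_of_nonneg_left h1 (by positivity)
  have heq : ‖x‖ ^ 2 - 2 * (α / β ^ 2) * (α * ‖x‖ ^ 2) + (α / β ^ 2) ^ 2 * (β ^ 2 * ‖x‖ ^ 2)
      = (1 - α ^ 2 / β ^ 2) * ‖x‖ ^ 2 := by
    field_simp; ring
  have h3 : α ^ 2 / (2 * β ^ 2) ≤ α ^ 2 / β ^ 2 := by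
    rw [div_le_div_iff₀ (by positivity) (by positivity)]; nlinarith
  have h4 : (1 - α ^ 2 / β ^ 2) * ‖x‖ ^ 2 ≤ (1 - α ^ 2 / (2 * β ^ 2)) * ‖x‖ ^ 2 := by
    nlinarith [mul_le_mul_of_nonneg_right h3 (sq_nonneg ‖x‖)]
  rw [hexp]
  linarith

noncomputable def matToE (p : ℕ) : Matrix (Fin p) (Fin p) ℝ ≃ₗ[ℝ] EuclideanSpace ℝ (Fin p × Fin p) where
  toFun D := (WithLp.equiv 2 _).symm fun ij => D ij.1 ij.2
  invFun u := Matrix.of fun i j => u (i, j)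
  map_add' _ _ := rfl
  map_smul' _ _ := rfl
  left_inv _ := rfl
  right_inv _ := rfl

theorem matToE_apply {p : ℕ} (D : Matrix (Fin p) (Fin p) ℝ) (ij : Fin p × Fin p) :
    matToE p D ij = D ij.1 ij.2 := rfl

theorem matToE_inner {p : ℕ} (M M' : Matrix (Fin p) (Fin p) ℝ) :
    ⟪matToE p M, matToE p M'⟫ = ∑ i, ∑ j, M i j * M' i j := by
  rw [PiLp.inner_apply, Fintype.sum_prod_type]
  simp [RCLike.inner_apply, matToE_apply]
  exact Finset.sum_congr rfl fun i _ => Finset.sum_congr rfl fun j _ => mul_comm _ _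

theorem matToE_norm_sq {p : ℕ} (M : Matrix (Fin p) (Fin p) ℝ) :
    ‖matToE p M‖ ^ 2 = ∑ i, ∑ j, (M i j) ^ 2 := by
  rw [← real_inner_self_eq_norm_sq, matToE_inner]
  simp [sq]

noncomputable def H0map {p N : ℕ} (A : Matrix (Fin p) (Fin p) ℝ) (w : Fin N → Fin p → ℝ) :
    Matrix (Fin p) (Fin p) ℝ →ₗ[ℝ] Matrix (Fin p) (Fin p) ℝ where
  toFun D := ((8 : ℝ) / N) • ∑ i, vecMulVec (A *ᵥ (D *ᵥ w i)) (w i)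
  map_add' D D' := by
    ext a b
    simp [vecMulVec_apply, add_mulVec, mulVec_add, Matrix.sum_apply, Matrix.smul_apply,
      Finset.sum_add_distrib, add_mul, mul_add]
  map_smul' c D := by
    ext a b
    simp [vecMulVec_apply, smul_mulVec, mulVec_smul, Matrix.sum_apply,
      Matrix.smul_apply, smul_eq_mul, Finset.mul_sum]
    exact Finset.sum_congr rfl fun i _ => by ring

theorem H0map_apply {p N : ℕ} (A : Matrix (Fin p) (Fin p) ℝ) (w : Fin N → Fin p → ℝ)
    (D : Matrix (Fin p) (Fin p) ℝ) :
    H0map A w D = ((8 : ℝ) / N) • ∑ i, vecMulVec (A *ᵥ (D *ᵥ w i)) (w i) := rfl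


/-- Theorem 1: meta-learning over `N` shifted least-squares tasks with
the DCOGD optimizer and one inner gradient step. If the `Zᵢ = θᵢ⁽¹⁾ − Δᵢ − (XᵀX)⁻¹Xᵀy`
span ℝᵖ, then there are `η > 0`, `ε ∈ (0,1)` and (for any fixed initial `B⁽¹⁾`) a
constant `C ≥ 0` such that the gradient-descent meta-iterates
`B⁽ᵏ⁺¹⁾ = B⁽ᵏ⁾ − η∇l^total(B⁽ᵏ⁾)` drive the one-step target-task loss
`l_target⁽ᵏ⁾ = ‖X(θₜ⁽¹⁾ − B⁽ᵏ⁾gₜ) − (y + XΔₜ)‖²` to the common optimal value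
`l* = ‖X(XᵀX)⁻¹Xᵀy − y‖²` at a linear rate: `l_target⁽ᵏ⁾ − l* ≤ C(1 − ε)ᵏ`. -/
theorem dcogd_meta_learning_one_step_convergence {n p N : ℕ} (hN : 0 < N)
    (X : Matrix (Fin n) (Fin p) ℝ) (hX : IsUnit (Xᵀ * X)) (y : Fin n → ℝ)
    (Δ θ₁ : Fin N → Fin p → ℝ)
    (g : Fin N → Fin p → ℝ)
    (hg : ∀ i, g i = (2 : ℝ) • ((Xᵀ * X) *ᵥ (θ₁ i - Δ i)) - (2 : ℝ) • (Xᵀ *ᵥ y))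
    (y' : Fin N → Fin n → ℝ)
    (hy' : ∀ i, y' i = -(X *ᵥ θ₁ i) + y + X *ᵥ Δ i)
    (Z : Fin N → Fin p → ℝ)
    (hZ : ∀ i, Z i = θ₁ i - Δ i - (Xᵀ * X)⁻¹ *ᵥ (Xᵀ *ᵥ y))
    (hspan : Submodule.span ℝ (Set.range Z) = ⊤)
    (ltotal : Matrix (Fin p) (Fin p) ℝ → ℝ)
    (hltotal : ∀ B, ltotal B = (1 / (N : ℝ)) * ∑ i, ∑ j, ((X *ᵥ (B *ᵥ g i) + y' i) j) ^ 2)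
    (gradTotal : Matrix (Fin p) (Fin p) ℝ → Matrix (Fin p) (Fin p) ℝ)
    (hgradTotal : ∀ B, gradTotal B =
      ((2 : ℝ) / (N : ℝ)) • ∑ i, vecMulVec (Xᵀ *ᵥ (X *ᵥ (B *ᵥ g i) + y' i)) (g i))
    (lstar : ℝ)
    (hlstar : lstar = ∑ j, ((X *ᵥ ((Xᵀ * X)⁻¹ *ᵥ (Xᵀ *ᵥ y)) - y) j) ^ 2)
    (Δt θt : Fin p → ℝ) (gt : Fin p → ℝ)
    (hgt : gt = (2 : ℝ) • ((Xᵀ * X) *ᵥ (θt - Δt)) - (2 : ℝ) • (Xᵀ *ᵥ y)) :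
    ∃ η > (0 : ℝ), ∃ ε ∈ Set.Ioo (0 : ℝ) 1,
      ∀ B₁ : Matrix (Fin p) (Fin p) ℝ, ∃ C ≥ (0 : ℝ),
        ∀ B : ℕ → Matrix (Fin p) (Fin p) ℝ, B 1 = B₁ →
          (∀ k ≥ 1, B (k + 1) = B k - η • gradTotal (B k)) →
          ∀ k ≥ 1,
            (∑ j, ((X *ᵥ (θt - B k *ᵥ gt) - (y + X *ᵥ Δt)) j) ^ 2) - lstar
              ≤ C * (1 - ε) ^ k := by
  classical
  have hNR : (0:ℝ) < (N:ℝ) := Nat.cast_pos.mpr hN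
  set A := Xᵀ * X with hA
  have hdet : IsUnit A.det := (Matrix.isUnit_iff_isUnit_det A).mp hX
  have hcanc1 : ∀ v : Fin p → ℝ, A *ᵥ (A⁻¹ *ᵥ v) = v := by
    intro v; rw [mulVec_mulVec, Matrix.mul_nonsing_inv A hdet, one_mulVec]
  have hcanc2 : ∀ v : Fin p → ℝ, A⁻¹ *ᵥ (A *ᵥ v) = v := by
    intro v; rw [mulVec_mulVec, Matrix.nonsing_inv_mul A hdet, one_mulVec]
  set θ' : Fin p → ℝ := A⁻¹ *ᵥ (Xᵀ *ᵥ y) with hθ'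
  have hAθ' : A *ᵥ θ' = Xᵀ *ᵥ y := hcanc1 _
  set r : Fin n → ℝ := X *ᵥ θ' - y with hr
  have hXTr : Xᵀ *ᵥ r = 0 := by
    rw [hr, mulVec_sub, mulVec_mulVec, ← hA, hAθ', sub_self]
  have hdotr : ∀ u : Fin p → ℝ, (X *ᵥ u) ⬝ᵥ r = 0 := by
    intro u
    have hvm : r ᵥ* X = Xᵀ *ᵥ r := by
      rw [← transpose_transpose X, vecMul_transpose, transpose_transpose]
    rw [dotProduct_comm, dotProduct_mulVec, hvm, hXTr, zero_dotProduct]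
  have hAdot : ∀ v : Fin p → ℝ, (A *ᵥ v) ⬝ᵥ v = (X *ᵥ v) ⬝ᵥ (X *ᵥ v) := by
    intro v
    rw [hA, ← mulVec_mulVec, dotProduct_comm, dotProduct_mulVec, vecMul_transpose]
  have hgZ : ∀ i, g i = (2 : ℝ) • (A *ᵥ Z i) := by
    intro i
    simp only [hg i, hZ i, mulVec_sub, hAθ', smul_sub]
  set Zt : Fin p → ℝ := θt - Δt - θ' with hZt
  have hgtZ : gt = (2 : ℝ) • (A *ᵥ Zt) := by
    simp only [hgt, hZt, mulVec_sub, hAθ', smul_sub]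
  have hy'' : ∀ i, y' i = -(X *ᵥ Z i) - r := by
    intro i
    simp only [hy' i, hZ i, hr, mulVec_sub]
    abel
  set Bs : Matrix (Fin p) (Fin p) ℝ := (2:ℝ)⁻¹ • A⁻¹ with hBs
  have hBsw : ∀ v : Fin p → ℝ, Bs *ᵥ (A *ᵥ v) = (2:ℝ)⁻¹ • v := by
    intro v; rw [hBs, smul_mulVec, hcanc2]
  -- the key vector computation in each gradient summand
  have hvec : ∀ (Bm : Matrix (Fin p) (Fin p) ℝ) (i : Fin N),
      Xᵀ *ᵥ (X *ᵥ (Bm *ᵥ g i) + y' i)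
        = (2:ℝ) • (A *ᵥ ((Bm - Bs) *ᵥ (A *ᵥ Z i))) := by
    intro Bm i
    have h1 : Xᵀ *ᵥ y' i = -(A *ᵥ Z i) := by
      rw [hy'' i, mulVec_sub, mulVec_neg, mulVec_mulVec, ← hA, hXTr, sub_zero]
    rw [mulVec_add, mulVec_mulVec, ← hA, h1, hgZ i, mulVec_smul, mulVec_smul,
      sub_mulVec, hBsw (Z i), mulVec_sub, mulVec_smul]
    module
  -- gradient identity
  have hgrad : ∀ Bm, gradTotal Bm = H0map A (fun i => A *ᵥ Z i) (Bm - Bs) := by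
    intro Bm
    rw [hgradTotal Bm, H0map_apply]
    ext a b
    simp only [Matrix.smul_apply, Matrix.sum_apply, smul_eq_mul, Finset.mul_sum]
    apply Finset.sum_congr rfl
    intro i _
    rw [hvec Bm i, hgZ i]
    simp only [vecMulVec_apply, Pi.smul_apply, smul_eq_mul]
    field_simp
    ring
  -- the transported linear map
  set HE : EuclideanSpace ℝ (Fin p × Fin p) →ₗ[ℝ] EuclideanSpace ℝ (Fin p × Fin p) :=
    (matToE p).toLinearMap ∘ₗ (H0map A (fun i => A *ᵥ Z i)) ∘ₗ (matToE p).symm.toLinearMap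
    with hHE
  have hHEapp : ∀ D : Matrix (Fin p) (Fin p) ℝ,
      HE (matToE p D) = matToE p (H0map A (fun i => A *ᵥ Z i) D) := by
    intro D
    rw [hHE]
    simp
  -- quadratic form formula
  have hqform : ∀ M : Matrix (Fin p) (Fin p) ℝ,
      ⟪HE (matToE p M), matToE p M⟫
        = ((8:ℝ)/N) * ∑ t, ∑ j, ((X *ᵥ (M *ᵥ (A *ᵥ Z t))) j)^2 := by
    intro M
    rw [hHEapp, matToE_inner, H0map_apply]
    have hterm : ∀ t, ∑ j, ((X *ᵥ (M *ᵥ (A *ᵥ Z t))) j)^2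
        = ∑ a, ∑ b, (A *ᵥ (M *ᵥ (A *ᵥ Z t))) a * (M a b * (A *ᵥ Z t) b) := by
      intro t
      have h := hAdot (M *ᵥ (A *ᵥ Z t))
      calc ∑ j, ((X *ᵥ (M *ᵥ (A *ᵥ Z t))) j)^2
          = (X *ᵥ (M *ᵥ (A *ᵥ Z t))) ⬝ᵥ (X *ᵥ (M *ᵥ (A *ᵥ Z t))) := by
            simp [dotProduct, sq]
      _ = (A *ᵥ (M *ᵥ (A *ᵥ Z t))) ⬝ᵥ (M *ᵥ (A *ᵥ Z t)) := h.symm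
      _ = ∑ a, ∑ b, (A *ᵥ (M *ᵥ (A *ᵥ Z t))) a * (M a b * (A *ᵥ Z t) b) := by
            simp [dotProduct, Matrix.mulVec, Finset.mul_sum]
    have sumswap : ∀ F : Fin p → Fin p → Fin N → ℝ,
        ∑ a, ∑ b, ∑ t, F a b t = ∑ t, ∑ a, ∑ b, F a b t := by
      intro F
      calc ∑ a, ∑ b, ∑ t, F a b t
          = ∑ a, ∑ t, ∑ b, F a b t := Finset.sum_congr rfl fun a _ => Finset.sum_comm
      _ = ∑ t, ∑ a, ∑ b, F a b t := Finset.sum_comm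
    simp only [hterm, Matrix.smul_apply, Matrix.sum_apply, vecMulVec_apply, smul_eq_mul,
      Finset.sum_mul, Finset.mul_sum]
    rw [sumswap]
    refine Finset.sum_congr rfl fun t _ => Finset.sum_congr rfl fun a _ =>
      Finset.sum_congr rfl fun b _ => by ring
  -- positivity of the quadratic form
  have hpos : ∀ u : EuclideanSpace ℝ (Fin p × Fin p), u ≠ 0 → 0 < ⟪HE u, u⟫ := by
    intro u hu
    set M := (matToE p).symm u with hM
    have hu' : u = matToE p M := ((matToE p).apply_symm_apply u).symm
    have hMne : M ≠ 0 := by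
      intro h
      apply hu
      rw [hu', h, map_zero]
    rw [hu', hqform]
    have h8 : (0:ℝ) < (8:ℝ)/N := by positivity
    apply mul_pos h8
    have hex : ∃ t, X *ᵥ (M *ᵥ (A *ᵥ Z t)) ≠ 0 := by
      by_contra hall
      push_neg at hall
      have hMz : ∀ t, M *ᵥ (A *ᵥ Z t) = 0 := by
        intro t
        have hA0 : A *ᵥ (M *ᵥ (A *ᵥ Z t)) = 0 := by
          rw [hA, ← mulVec_mulVec, hall t, mulVec_zero]
        calc M *ᵥ (A *ᵥ Z t) = A⁻¹ *ᵥ (A *ᵥ (M *ᵥ (A *ᵥ Z t))) := (hcanc2 _).symm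
        _ = 0 := by rw [hA0, mulVec_zero]
      set ψ : (Fin p → ℝ) →ₗ[ℝ] (Fin p → ℝ) := M.mulVecLin ∘ₗ A.mulVecLin with hψ
      have hker : LinearMap.ker ψ = ⊤ := by
        rw [← top_le_iff, ← hspan, Submodule.span_le]
        rintro _ ⟨t, rfl⟩
        simp only [SetLike.mem_coe, LinearMap.mem_ker, hψ, LinearMap.comp_apply,
          mulVecLin_apply]
        exact hMz t
      have hψ0 : ∀ v, M *ᵥ (A *ᵥ v) = 0 := by
        intro v
        have h0 := LinearMap.ker_eq_top.mp hker
        have := LinearMap.ext_iff.mp h0 v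
        simpa [hψ, LinearMap.comp_apply, mulVecLin_apply] using this
      apply hMne
      ext a b
      have h1 : M *ᵥ Pi.single b 1 = 0 := by
        have := hψ0 (A⁻¹ *ᵥ Pi.single b 1)
        rwa [hcanc1] at this
      have h2 := congrFun h1 a
      rw [mulVec_single] at h2
      simpa using h2
    obtain ⟨t0, ht0⟩ := hex
    apply Finset.sum_pos'
    · intro t _
      positivity
    · refine ⟨t0, Finset.mem_univ t0, ?_⟩
      obtain ⟨j, hj⟩ := Function.ne_iff.mp ht0
      apply Finset.sum_pos'
      · intro j _; positivity
      · refine ⟨j, Finset.mem_univ j, ?_⟩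
        have hj' : (X *ᵥ (M *ᵥ (A *ᵥ Z t0))) j ≠ 0 := by simpa using hj
        positivity
  -- apply the contraction lemma
  obtain ⟨η, hη, ε, hε, hstep⟩ := contraction_step HE hpos
  have h1ε : 0 < 1 - ε := by
    have := hε.2
    linarith
  refine ⟨η, hη, ε, hε, ?_⟩
  intro B₁
  set KX : ℝ := ∑ j, ∑ l, (X j l)^2 with hKX
  set Kw : ℝ := ∑ m, ((A *ᵥ Zt) m)^2 with hKw
  have hKXnn : 0 ≤ KX := by positivity
  have hKwnn : 0 ≤ Kw := by positivity
  set C0 : ℝ := ‖matToE p (B₁ - Bs)‖^2 with hC0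
  have hC0nn : 0 ≤ C0 := hC0 ▸ sq_nonneg _
  have hCnn : (0:ℝ) ≤ 4 * KX * Kw * C0 / (1 - ε) :=
    div_nonneg (mul_nonneg (mul_nonneg (mul_nonneg (by norm_num) hKXnn) hKwnn) hC0nn)
      (le_of_lt h1ε)
  refine ⟨4 * KX * Kw * C0 / (1 - ε), hCnn, ?_⟩
  intro B hB1 hrec k hk
  -- geometric decay of the iterates
  have hiter : ∀ m, 1 ≤ m → ‖matToE p (B m - Bs)‖^2 ≤ (1-ε)^(m-1) * C0 := by
    intro m hm
    induction m, hm using Nat.le_induction with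
    | base => simp [hB1, hC0]
    | succ m hm ih =>
      have hBe : B (m+1) - Bs
          = (B m - Bs) - η • (H0map A (fun i => A *ᵥ Z i) (B m - Bs)) := by
        rw [hrec m hm, hgrad (B m)]
        abel
      have hmm : m - 1 + 1 = m := Nat.succ_pred_eq_of_pos hm
      calc ‖matToE p (B (m+1) - Bs)‖^2
          = ‖matToE p (B m - Bs) - η • HE (matToE p (B m - Bs))‖^2 := by
            rw [hBe, _root_.map_sub, _root_.map_smul, hHEapp]
      _ ≤ (1-ε) * ‖matToE p (B m - Bs)‖^2 := hstep _
      _ ≤ (1-ε) * ((1-ε)^(m-1) * C0) := by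
            exact mul_le_mul_of_nonneg_left ih (le_of_lt h1ε)
      _ = (1-ε)^(m+1-1) * C0 := by
            conv_rhs => rw [Nat.add_sub_cancel, ← hmm, pow_succ]
            ring
  -- gap identity
  have hgap : ∀ Bm : Matrix (Fin p) (Fin p) ℝ,
      (∑ j, ((X *ᵥ (θt - Bm *ᵥ gt) - (y + X *ᵥ Δt)) j)^2) - lstar
        = 4 * ∑ j, ((X *ᵥ ((Bm - Bs) *ᵥ (A *ᵥ Zt))) j)^2 := by
    intro Bm
    have hVec : X *ᵥ (θt - Bm *ᵥ gt) - (y + X *ᵥ Δt)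
        = (-2 : ℝ) • (X *ᵥ ((Bm - Bs) *ᵥ (A *ᵥ Zt))) + r := by
      rw [hgtZ, mulVec_smul, sub_mulVec, hBsw Zt, hZt, hr]
      simp only [mulVec_sub, mulVec_add, mulVec_smul, smul_sub]
      module
    rw [hVec, hlstar]
    have hcross := hdotr ((Bm - Bs) *ᵥ (A *ᵥ Zt))
    simp only [dotProduct] at hcross
    have expand : ∀ j, (((-2:ℝ) • (X *ᵥ ((Bm - Bs) *ᵥ (A *ᵥ Zt))) + r) j)^2
        = 4*((X *ᵥ ((Bm - Bs) *ᵥ (A *ᵥ Zt))) j)^2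
          + (-4)*((X *ᵥ ((Bm - Bs) *ᵥ (A *ᵥ Zt))) j * r j) + (r j)^2 := by
      intro j
      simp only [Pi.add_apply, Pi.smul_apply, smul_eq_mul]
      ring
    rw [Finset.sum_congr rfl (fun j _ => expand j)]
    rw [Finset.sum_add_distrib, Finset.sum_add_distrib, ← Finset.mul_sum, ← Finset.mul_sum,
      hcross]
    ring
  -- Cauchy–Schwarz bound
  have hCS : ∀ Dm : Matrix (Fin p) (Fin p) ℝ,
      ∑ j, ((X *ᵥ (Dm *ᵥ (A *ᵥ Zt))) j)^2 ≤ KX * (‖matToE p Dm‖^2 * Kw) := by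
    intro Dm
    have hv : ∀ l, ((Dm *ᵥ (A *ᵥ Zt)) l)^2 ≤ (∑ m, (Dm l m)^2) * Kw := by
      intro l
      have : (Dm *ᵥ (A *ᵥ Zt)) l = ∑ m, Dm l m * (A *ᵥ Zt) m := by
        simp [Matrix.mulVec, dotProduct]
      rw [this, hKw]
      exact Finset.sum_mul_sq_le_sq_mul_sq _ _ _
    have hsum1 : ∑ l, ((Dm *ᵥ (A *ᵥ Zt)) l)^2 ≤ ‖matToE p Dm‖^2 * Kw := by
      calc ∑ l, ((Dm *ᵥ (A *ᵥ Zt)) l)^2 ≤ ∑ l, (∑ m, (Dm l m)^2) * Kw :=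
            Finset.sum_le_sum fun l _ => hv l
      _ = (∑ l, ∑ m, (Dm l m)^2) * Kw := by rw [Finset.sum_mul]
      _ = ‖matToE p Dm‖^2 * Kw := by rw [matToE_norm_sq]
    have hrow : ∀ j, ((X *ᵥ (Dm *ᵥ (A *ᵥ Zt))) j)^2
        ≤ (∑ l, (X j l)^2) * ∑ l, ((Dm *ᵥ (A *ᵥ Zt)) l)^2 := by
      intro j
      have : (X *ᵥ (Dm *ᵥ (A *ᵥ Zt))) j = ∑ l, X j l * (Dm *ᵥ (A *ᵥ Zt)) l := by
        simp [Matrix.mulVec, dotProduct]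
      rw [this]
      exact Finset.sum_mul_sq_le_sq_mul_sq _ _ _
    calc ∑ j, ((X *ᵥ (Dm *ᵥ (A *ᵥ Zt))) j)^2
        ≤ ∑ j, (∑ l, (X j l)^2) * ∑ l, ((Dm *ᵥ (A *ᵥ Zt)) l)^2 :=
          Finset.sum_le_sum fun j _ => hrow j
    _ = KX * ∑ l, ((Dm *ᵥ (A *ᵥ Zt)) l)^2 := by rw [hKX, Finset.sum_mul]
    _ ≤ KX * (‖matToE p Dm‖^2 * Kw) := mul_le_mul_of_nonneg_left hsum1 hKXnn
  -- finish
  have hkk : k - 1 + 1 = k := Nat.succ_pred_eq_of_pos hk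
  calc (∑ j, ((X *ᵥ (θt - B k *ᵥ gt) - (y + X *ᵥ Δt)) j)^2) - lstar
      = 4 * ∑ j, ((X *ᵥ ((B k - Bs) *ᵥ (A *ᵥ Zt))) j)^2 := hgap (B k)
  _ ≤ 4 * (KX * (‖matToE p (B k - Bs)‖^2 * Kw)) := by
      have := hCS (B k - Bs)
      linarith
  _ ≤ 4 * (KX * (((1-ε)^(k-1) * C0) * Kw)) := by
      have h1 := hiter k hk
      have h2 : ‖matToE p (B k - Bs)‖^2 * Kw ≤ ((1-ε)^(k-1) * C0) * Kw :=
        mul_le_mul_of_nonneg_right h1 hKwnn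
      have h3 : KX * (‖matToE p (B k - Bs)‖^2 * Kw) ≤ KX * (((1-ε)^(k-1) * C0) * Kw) :=
        mul_le_mul_of_nonneg_left h2 hKXnn
      linarith
  _ = 4 * KX * Kw * C0 / (1 - ε) * (1-ε)^k := by
      rw [← hkk, pow_succ]
      rw [Nat.add_sub_cancel]
      field_simp
end
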